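/- arXiv:1601.04223 — 2 statements merged into one kernel-verified Lean document; each statement's English description precedes it below -/
import Mathlib

section
/- For every integer n ≥ 13, u(n) + (4/3)·C_n > 2·S_n, where u(n) = 4^{n+1}/(3√(π n^3)), C_n is the n-th Catalan number, and S_n is the sum of the first n Catalan numbers. -/
open Real Filter

noncomputable def C (k : ℕ) : ℝ := (Nat.choose (2 * k) k : ℝ) / ((k : ℝ) + 1)

noncomputable def S (n : ℕ) : ℝ := ∑ k ∈ Finset.Icc 1 n, C k

noncomputable def u (n : ℕ) : ℝ := 4 ^ (n + 1) / (3 * Real.sqrt (π * (n : ℝ) ^ 3))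

noncomputable def ϑ (n : ℕ) : ℝ := 4 ^ (n + 1) / (3 * ((n : ℝ) + 1) * Real.sqrt (π * n))

/-! The inequality is proved by induction from `n = 13`. As `S (n + 1) = S n + C (n + 1)`, the
inductive step amounts to `2/3 C (n + 1) + 4/3 C n ≤ u (n + 1) - u n`. With `k = n + 1` both
Catalan numbers are rational multiples of `binom(2k, k)`, and the Wallis product gives
`binom(2k, k) ≤ 4^k / √(π (k + 1/4))`, because `W m (2m + 1) / (m + 1/4)` decreases to `π`.
The shift `1/4` matters: the familiar bound `4^k / √(π k)` is too weak for the step. What remains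
is an inequality between algebraic functions of `k`, which for `k ≥ 14` follows by squaring out
the radicals, bounding `√k √(k - 1) ≤ k - 1/2`, and checking a polynomial inequality. The base
case is a computation with `π < 3.1416`. -/

open Topology

namespace Real.Wallis

lemma W_mul_two_mul_add_one (n : ℕ) :
    W n * (2 * n + 1) = 16 ^ n / (n.centralBinom : ℝ) ^ 2 := by
  rw [W_eq_factorial_ratio, Nat.centralBinom_eq_two_mul_choose, Nat.cast_choose ℝ (by omega),
    show 2 * n - n = n by omega, pow_mul]
  field_simp
  norm_num

lemma antitone_W_mul_div : Antitone fun m : ℕ => W m * (2 * m + 1) / (m + 1 / 4) := by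
  refine antitone_nat_of_succ_le fun m => ?_
  rw [div_le_div_iff₀ (by positivity) (by positivity), W_succ]
  have := W_pos m
  push_cast
  field_simp
  nlinarith

lemma tendsto_W_mul_div :
    Tendsto (fun m : ℕ => W m * (2 * m + 1) / (m + 1 / 4)) atTop (𝓝 π) := by
  have h : Tendsto (fun m : ℕ => 2 + (1 / 2) / ((m : ℝ) + 1 / 4)) atTop (𝓝 2) := by
    simpa using (tendsto_const_nhds.div_atTop
      (tendsto_atTop_add_const_right _ _ tendsto_natCast_atTop_atTop)).const_add (2 : ℝ)
  convert tendsto_W_nhds_pi_div_two.mul h using 1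
  · ext m
    field_simp
    ring
  · field_simp

end Real.Wallis

open Real.Wallis in
theorem pi_mul_centralBinom_sq_le (n : ℕ) :
    π * (n + 1 / 4) * (n.centralBinom : ℝ) ^ 2 ≤ 16 ^ n := by
  have h := antitone_W_mul_div.le_of_tendsto tendsto_W_mul_div n
  rw [le_div_iff₀ (by positivity), W_mul_two_mul_add_one,
    le_div_iff₀ (by have := n.centralBinom_pos; positivity)] at h
  exact h

theorem centralBinom_le_four_pow_div_sqrt (n : ℕ) :
    (n.centralBinom : ℝ) ≤ 4 ^ n / √(π * (n + 1 / 4)) := by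
  rw [le_div_iff₀ (sqrt_pos.mpr (by positivity))]
  refine (pow_le_pow_iff_left₀ (by positivity) (by positivity) two_ne_zero).mp ?_
  rw [mul_pow, sq_sqrt (by positivity), ← pow_mul, mul_comm n 2, pow_mul]
  norm_num
  linarith [pi_mul_centralBinom_sq_le n]

lemma poly_le_of_fourteen_le {k : ℝ} (hk : 14 ≤ k) :
    36 * k ^ 5 * (k - 1) ^ 3 ≤
      (16 * (k - 1) ^ 3 + k ^ 3 - 8 * k * (k - 1) * (k - 1 / 2)) *
        ((k + 1) ^ 2 * (2 * k - 1) ^ 2 * (k + 1 / 4)) := by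
  have ht : 0 ≤ k - 14 := by linarith
  nlinarith [pow_nonneg ht 7, pow_nonneg ht 6, pow_nonneg ht 5, pow_nonneg ht 4,
    pow_nonneg ht 3, pow_nonneg ht 2]

lemma six_mul_mul_le_of_sq_eq {k a b c : ℝ} (hk : 14 ≤ k) (ha : 0 ≤ a) (hb : 0 ≤ b)
    (hc : 0 ≤ c) (ha2 : a ^ 2 = k) (hb2 : b ^ 2 = k - 1) (hc2 : c ^ 2 = k + 1 / 4) :
    6 * k * (k * a * ((k - 1) * b)) ≤
      (4 * ((k - 1) * b) - k * a) * ((k + 1) * (2 * k - 1) * c) := by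
  have hka : 0 ≤ k * a := mul_nonneg (by linarith) ha
  have hkb : 0 ≤ (k - 1) * b := mul_nonneg (by linarith) hb
  have hab : a * b ≤ k - 1 / 2 := by nlinarith [sq_nonneg (a - b)]
  have hN : k * a ≤ 4 * ((k - 1) * b) := by
    refine (pow_le_pow_iff_left₀ hka (by linarith) two_ne_zero).mp ?_
    rw [mul_pow, mul_pow, mul_pow, ha2, hb2]
    nlinarith
  refine (pow_le_pow_iff_left₀ (mul_nonneg (by linarith) (mul_nonneg hka hkb))
    (mul_nonneg (by linarith) (mul_nonneg (by nlinarith) hc)) two_ne_zero).mp ?_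
  have e1 : (6 * k * (k * a * ((k - 1) * b))) ^ 2 = 36 * k ^ 5 * (k - 1) ^ 3 := by
    linear_combination (36 * k ^ 4 * (k - 1) ^ 2 * b ^ 2) * ha2 + 36 * k ^ 5 * (k - 1) ^ 2 * hb2
  have e2 : ((4 * ((k - 1) * b) - k * a) * ((k + 1) * (2 * k - 1) * c)) ^ 2 =
      (16 * (k - 1) ^ 3 + k ^ 3 - 8 * k * (k - 1) * (a * b)) *
        ((k + 1) ^ 2 * (2 * k - 1) ^ 2 * (k + 1 / 4)) := by
    rw [mul_pow, sub_sq, mul_pow, mul_pow, mul_pow, mul_pow, ha2, hb2, hc2]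
    ring
  rw [e1, e2]
  have h8 : 0 ≤ 8 * k * (k - 1) := by nlinarith
  have hQ : 0 ≤ (k + 1) ^ 2 * (2 * k - 1) ^ 2 * (k + 1 / 4) := by positivity
  nlinarith [mul_le_mul_of_nonneg_right (mul_le_mul_of_nonneg_left hab h8) hQ,
    poly_le_of_fourteen_le hk]

lemma six_mul_div_le_four_div_sub_one_div {k : ℝ} (hk : 14 ≤ k) :
    6 * k / ((k + 1) * (2 * k - 1) * √(k + 1 / 4)) ≤
      4 / (k * √k) - 1 / ((k - 1) * √(k - 1)) := by
  have hs (x : ℝ) (hx : 0 < x) : 0 < x * √x := mul_pos hx (sqrt_pos.mpr hx)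
  rw [div_sub_div _ _ (hs k (by linarith)).ne' (hs (k - 1) (by linarith)).ne',
    div_le_div_iff₀ (mul_pos (by nlinarith) (sqrt_pos.mpr (by linarith)))
      (mul_pos (hs k (by linarith)) (hs (k - 1) (by linarith))), mul_one]
  exact six_mul_mul_le_of_sq_eq hk (sqrt_nonneg _) (sqrt_nonneg _) (sqrt_nonneg _)
    (sq_sqrt (by linarith)) (sq_sqrt (by linarith)) (sq_sqrt (by linarith))

lemma S_succ (n : ℕ) : S (n + 1) = S n + C (n + 1) :=
  Finset.sum_Icc_succ_top (by omega) _

lemma C_eq_centralBinom_succ_div (n : ℕ) : C n = (n + 1).centralBinom / (2 * (2 * n + 1)) := by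
  have h : ((n + 1 : ℕ) : ℝ) * (n + 1).centralBinom = 2 * (2 * n + 1) * n.centralBinom := by
    exact_mod_cast n.succ_mul_centralBinom_succ
  rw [C, ← Nat.centralBinom_eq_two_mul_choose, eq_div_iff (by positivity), div_mul_eq_mul_div,
    div_eq_iff (by positivity)]
  push_cast at h
  linear_combination -h

lemma u_eq (n : ℕ) : u n = 4 ^ (n + 1) / (3 * √π * (n * √n)) := by
  rw [u, sqrt_mul pi_pos.le, show (n : ℝ) ^ 3 = n ^ 2 * n by ring, sqrt_mul (sq_nonneg _),
    sqrt_sq (Nat.cast_nonneg n)]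
  ring

lemma two_div_three_mul_C_succ_add_le_u_succ_sub_u {n : ℕ} (hn : 13 ≤ n) :
    2 / 3 * C (n + 1) + 4 / 3 * C n ≤ u (n + 1) - u n := by
  obtain ⟨k, hk_def⟩ : ∃ k : ℝ, k = n + 1 := ⟨_, rfl⟩
  have hn' : (n : ℝ) = k - 1 := by rw [hk_def]; ring
  have hk : 14 ≤ k := by
    rw [hk_def]
    exact_mod_cast Nat.succ_le_succ hn
  have h2k : 0 < 2 * k - 1 := by linarith
  have hk1 : 0 < k - 1 := by linarith
  have hsk1 : 0 < √(k - 1) := sqrt_pos.mpr hk1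
  have hC : 2 / 3 * C (n + 1) + 4 / 3 * C n =
      2 * k / ((k + 1) * (2 * k - 1)) * (n + 1).centralBinom := by
    rw [C_eq_centralBinom_succ_div n, C, ← Nat.centralBinom_eq_two_mul_choose]
    push_cast
    rw [hn']
    field_simp [h2k.ne']
    ring
  have hu : u (n + 1) - u n =
      4 ^ (n + 1) / (3 * √π) * (4 / (k * √k) - 1 / ((k - 1) * √(k - 1))) := by
    rw [u_eq, u_eq, hn']
    push_cast
    rw [hn', sub_add_cancel]
    field_simp [hk1.ne', hsk1.ne']
    ring
  have hcb : ((n + 1).centralBinom : ℝ) ≤ 4 ^ (n + 1) / (√π * √(k + 1 / 4)) := by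
    rw [← sqrt_mul pi_pos.le, hk_def]
    exact_mod_cast centralBinom_le_four_pow_div_sqrt (n + 1)
  rw [hC, hu]
  calc 2 * k / ((k + 1) * (2 * k - 1)) * (n + 1).centralBinom
      ≤ 2 * k / ((k + 1) * (2 * k - 1)) * (4 ^ (n + 1) / (√π * √(k + 1 / 4))) := by
        gcongr
    _ = 4 ^ (n + 1) / (3 * √π) * (6 * k / ((k + 1) * (2 * k - 1) * √(k + 1 / 4))) := by
        field_simp
        ring
    _ ≤ 4 ^ (n + 1) / (3 * √π) * (4 / (k * √k) - 1 / ((k - 1) * √(k - 1))) := by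
        gcongr
        exact six_mul_div_le_four_div_sub_one_div hk

lemma u_add_C_gt_two_mul_S_thirteen : u 13 + 4 / 3 * C 13 > 2 * S 13 := by
  have hC : C 13 = 742900 := by
    norm_num [C, Nat.choose_eq_factorial_div_factorial, Nat.factorial]
  have hS : S 13 = 1033411 := by
    norm_num [S, C, Finset.sum_Icc_succ_top, Nat.choose_eq_factorial_div_factorial, Nat.factorial]
  have hsqrt : √(π * 13 ^ 3) < 83.1 := by
    rw [sqrt_lt' (by norm_num)]
    nlinarith [pi_lt_d4]
  rw [hC, hS, u, gt_iff_lt, ← sub_lt_iff_lt_add, lt_div_iff₀ (by positivity)]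
  push_cast
  linarith

theorem stmt10 (n : ℕ) (hn : 13 ≤ n) : u n + 4 / 3 * C n > 2 * S n := by
  induction n, hn using Nat.le_induction with
  | base => exact u_add_C_gt_two_mul_S_thirteen
  | succ n hn ih =>
    rw [S_succ]
    linarith [two_div_three_mul_C_succ_add_le_u_succ_sub_u hn]
end

section
/- For every integer n ≥ 1, 2·C_{n+1} + 4·C_n = 4·C_n·(1 + (2n+1)/(n+2)) < 3·2^{2n+3} / ((n+2)·√(π(4n+1))). -/
/-!
With `b n = (2n).choose n`, the identity is the recursion `(n + 1) b (n + 1) = 2 (2n + 1) b n`,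
and the inequality reduces to `b n * √(π (4n + 1)) < 2 * 4 ^ n`. The sequence
`π (4n + 1) b n ^ 2 / 16 ^ n` is strictly increasing (its consecutive differences are
`π b n ^ 2 / (4 (n + 1) ^ 2 16 ^ n)`), and since Wallis' product equals `16 ^ n / ((2n + 1) b n ^ 2)`
and tends to `π / 2`, the sequence tends to `4`. Hence it stays below `4`.
-/

open Real Filter Topology

noncomputable def centralBinomWallis (n : ℕ) : ℝ :=
  π * (4 * n + 1) * (Nat.centralBinom n : ℝ) ^ 2 / 16 ^ n

lemma Nat.cast_centralBinom_succ (n : ℕ) :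
    (Nat.centralBinom (n + 1) : ℝ) = 2 * (2 * n + 1) * Nat.centralBinom n / (n + 1) := by
  rw [eq_div_iff (by positivity)]
  exact_mod_cast (mul_comm _ _).trans (Nat.succ_mul_centralBinom_succ n)

lemma Real.Wallis.W_eq_centralBinom (n : ℕ) :
    Real.Wallis.W n = 16 ^ n / ((Nat.centralBinom n : ℝ) ^ 2 * (2 * n + 1)) := by
  have hfact : ((2 * n).factorial : ℝ) = Nat.centralBinom n * n.factorial * n.factorial := by
    have h := Nat.choose_mul_factorial_mul_factorial (Nat.le_mul_of_pos_left n two_pos)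
    rw [show 2 * n - n = n by omega] at h
    exact_mod_cast h.symm
  rw [Real.Wallis.W_eq_factorial_ratio, hfact, pow_mul]
  field_simp
  norm_num

lemma centralBinomWallis_succ_sub (n : ℕ) :
    centralBinomWallis (n + 1) - centralBinomWallis n
      = π * (Nat.centralBinom n : ℝ) ^ 2 / (4 * (n + 1) ^ 2 * 16 ^ n) := by
  unfold centralBinomWallis
  rw [Nat.cast_centralBinom_succ]
  field_simp
  push_cast
  ring

lemma strictMono_centralBinomWallis : StrictMono centralBinomWallis :=
  strictMono_nat_of_lt_succ fun n ↦ sub_pos.mp <| by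
    rw [centralBinomWallis_succ_sub]
    have := Nat.centralBinom_pos n
    positivity

lemma tendsto_centralBinomWallis : Tendsto centralBinomWallis atTop (𝓝 4) := by
  have hratio : Tendsto (fun n : ℕ ↦ (1 + 4 * n : ℝ) / (1 + 2 * n)) atTop (𝓝 (4 / 2)) :=
    tendsto_add_mul_div_add_mul_atTop_nhds 1 1 4 two_ne_zero
  have hlim := (hratio.const_mul π).div Real.Wallis.tendsto_W_nhds_pi_div_two (by positivity)
  convert hlim using 2
  · funext n
    rw [Pi.div_apply, Real.Wallis.W_eq_centralBinom, centralBinomWallis]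
    field_simp
    ring
  · field_simp

lemma centralBinomWallis_lt_four (n : ℕ) : centralBinomWallis n < 4 :=
  (strictMono_centralBinomWallis (Nat.lt_succ_self n)).trans_le
    (strictMono_centralBinomWallis.monotone.ge_of_tendsto tendsto_centralBinomWallis _)

lemma centralBinom_mul_sqrt_lt (n : ℕ) :
    (Nat.centralBinom n : ℝ) * √(π * (4 * n + 1)) < 2 * 4 ^ n := by
  have h := centralBinomWallis_lt_four n
  rw [centralBinomWallis, div_lt_iff₀ (by positivity)] at h
  apply lt_of_pow_lt_pow_left₀ 2 (by positivity)
  rw [mul_pow, sq_sqrt (by positivity), mul_pow, ← pow_mul, mul_comm n, pow_mul]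
  norm_num
  linarith

lemma C_eq_centralBinom (n : ℕ) : C n = Nat.centralBinom n / (n + 1) := rfl

lemma C_succ (n : ℕ) : C (n + 1) = 2 * (2 * n + 1) / (n + 2) * C n := by
  rw [C_eq_centralBinom, C_eq_centralBinom, Nat.cast_centralBinom_succ]
  field_simp
  push_cast
  ring

theorem stmt18_general (n : ℕ) :
    2 * C (n + 1) + 4 * C n = 4 * C n * (1 + (2 * (n : ℝ) + 1) / ((n : ℝ) + 2)) ∧
    4 * C n * (1 + (2 * (n : ℝ) + 1) / ((n : ℝ) + 2)) < 3 * 2 ^ (2 * n + 3) / (((n : ℝ) + 2) * Real.sqrt (π * (4 * (n : ℝ) + 1))) := by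
  have hlhs : 4 * C n * (1 + (2 * (n : ℝ) + 1) / ((n : ℝ) + 2))
      = 12 * Nat.centralBinom n / (n + 2) := by
    rw [C_eq_centralBinom]
    field_simp
    ring
  have hrhs : 3 * (2 : ℝ) ^ (2 * n + 3) = 24 * 4 ^ n := by
    rw [pow_add, pow_mul]
    norm_num
    ring
  refine ⟨by rw [C_succ]; field_simp; ring, ?_⟩
  have hsqrt : 0 < √(π * (4 * (n : ℝ) + 1)) := by positivity
  rw [hlhs, hrhs, div_lt_div_iff₀ (by positivity) (by positivity)]
  nlinarith [centralBinom_mul_sqrt_lt n]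

theorem stmt18 (n : ℕ) (hn : 1 ≤ n) :
    2 * C (n + 1) + 4 * C n = 4 * C n * (1 + (2 * (n : ℝ) + 1) / ((n : ℝ) + 2)) ∧
    4 * C n * (1 + (2 * (n : ℝ) + 1) / ((n : ℝ) + 2)) < 3 * 2 ^ (2 * n + 3) / (((n : ℝ) + 2) * Real.sqrt (π * (4 * (n : ℝ) + 1))) :=
  stmt18_general n
end
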